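/- Let γ, δ > 0 and define Φ(x,λ) := x^γ β̂_{γ,δ+1}(λx) and Ψ(x,λ) := x^δ β̂_{δ,γ+1}(λx) for x > 0, λ ∈ ℝ. Then for all x > 0 and λ ∈ ℝ: ∂Φ/∂x (x,λ) = e^{−λx} Ψ(x,−λ) · γ x^{γ−1} / x^δ, and ∂Ψ/∂x (x,λ) = e^{−λx} Φ(x,−λ) · δ x^{δ−1} / x^γ. (That is, the pair (Φ, Ψ) solves the coupled differential system φ(dx,λ) = e^{−λx} φ̌(x,−λ) H(dx)/Ȟ(x), φ̌(dx,λ) = e^{−λx} φ(x,−λ) Ȟ(dx)/H(x) for H(x) = x^γ, Ȟ(x) = x^δ.) -/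

import Mathlib

open Filter Set

/-- The Beta(a,b) density on `[0,1]`: `β_{a,b}(t) = Γ(a+b)/(Γ(a)Γ(b)) t^(a-1) (1-t)^(b-1)`. -/
noncomputable def betaDens (a b t : ℝ) : ℝ :=
  (Real.Gamma (a + b) / (Real.Gamma a * Real.Gamma b)) * t ^ (a - 1) * (1 - t) ^ (b - 1)

/-- `β̂_{a,b}(λ) = ∫_0^1 e^{-λ t} β_{a,b}(t) dt`. -/
noncomputable def betaHat (a b lam : ℝ) : ℝ :=
  ∫ t in (0:ℝ)..1, Real.exp (-lam * t) * betaDens a b t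

/-
Writing out the Beta density, `Φ(x,λ) = C ∫₀¹ e^{-λxt} x^γ t^{γ-1} (1-t)^δ dt`. Differentiating
under the integral sign gives `∂Φ/∂x = x^{γ-1} (γ β̂_{γ,δ+1}(A) - A ∫₀¹ t e^{-At} β_{γ,δ+1}(t) dt)`
with `A = λx`. Integrating the derivative of `e^{-At} t^γ (1-t)^δ`, which vanishes at both ends of
`[0,1]`, turns the bracket into `γ β̂_{γ+1,δ}(A)`, and the reflection `t ↦ 1 - t` gives
`β̂_{δ,γ+1}(-A) = e^A β̂_{γ+1,δ}(A)`. The formula for `Ψ` is the one for `Φ` with `γ` and `δ`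
exchanged.
-/

open MeasureTheory Real
open scoped Interval

lemma betaDens_one_sub (a b t : ℝ) : betaDens a b (1 - t) = betaDens b a t := by
  simp only [betaDens, sub_sub_cancel, add_comm a b, mul_comm (Gamma a)]
  ring

lemma betaDens_eqOn_betaPDFReal (a b : ℝ) :
    EqOn (betaDens a b) (ProbabilityTheory.betaPDFReal a b) (Ioo 0 1) := by
  intro t ht
  simp [betaDens, ProbabilityTheory.betaPDFReal, ht.1, ht.2, ProbabilityTheory.beta]

lemma intervalIntegrable_betaDens {a b : ℝ} (ha : 0 < a) (hb : 0 < b) :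
    IntervalIntegrable (betaDens a b) volume 0 1 := by
  have hpdf : Integrable (ProbabilityTheory.betaPDFReal a b) := by
    have h := integrable_toReal_of_lintegral_ne_top (μ := volume)
      (ProbabilityTheory.measurable_betaPDFReal a b).ennreal_ofReal.aemeasurable
      (by change ∫⁻ x, ProbabilityTheory.betaPDF a b x ≠ ⊤
          simp [ProbabilityTheory.lintegral_betaPDF_eq_one ha hb])
    refine h.congr (Eventually.of_forall fun t => ENNReal.toReal_ofReal ?_)
    by_cases ht : 0 < t ∧ t < 1
    · exact (ProbabilityTheory.betaPDFReal_pos ht.1 ht.2 ha hb).le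
    · simp [ProbabilityTheory.betaPDFReal, ht]
  rw [intervalIntegrable_iff_integrableOn_Ioo_of_le zero_le_one]
  exact (hpdf.integrableOn).congr_fun (betaDens_eqOn_betaPDFReal a b).symm measurableSet_Ioo

lemma betaHat_neg (a b μ : ℝ) : betaHat b a (-μ) = exp μ * betaHat a b μ := by
  have h := intervalIntegral.integral_comp_sub_left
    (fun t => exp (- -μ * t) * betaDens b a t) (a := 0) (b := 1) 1
  simp only [sub_zero, sub_self, betaDens_one_sub] at h
  rw [betaHat, ← h, betaHat, ← intervalIntegral.integral_const_mul]
  congr 1 with t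
  rw [← mul_assoc, ← exp_add]
  ring_nf

lemma hasDerivAt_integral_exp_neg_mul {f : ℝ → ℝ} {a b : ℝ}
    (hf : IntervalIntegrable f volume a b) (μ : ℝ) :
    HasDerivAt (fun μ => ∫ t in a..b, exp (-μ * t) * f t)
      (∫ t in a..b, -(t * exp (-μ * t) * f t)) μ := by
  set R := |a| + |b|
  have hR : ∀ t ∈ Ι a b, |t| ≤ R := by
    intro t ht
    rcases mem_uIcc.mp (uIoc_subset_uIcc ht) with ⟨h₁, h₂⟩ | ⟨h₁, h₂⟩ <;>
      exact abs_le.mpr ⟨by linarith [neg_abs_le a, neg_abs_le b, abs_nonneg a, abs_nonneg b],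
        by linarith [le_abs_self a, le_abs_self b, abs_nonneg a, abs_nonneg b]⟩
  have hmeas : AEStronglyMeasurable f (volume.restrict (Ι a b)) := hf.def'.aestronglyMeasurable
  have hexp : ∀ ν : ℝ, Continuous fun t : ℝ => exp (-ν * t) := by fun_prop
  refine (intervalIntegral.hasDerivAt_integral_of_dominated_loc_of_deriv_le
    (F := fun ν t => exp (-ν * t) * f t) (F' := fun ν t => -(t * exp (-ν * t) * f t))
    (bound := fun t => R * exp ((|μ| + 1) * R) * |f t|) (Metric.ball_mem_nhds μ one_pos)
    (Eventually.of_forall fun ν => ((hexp ν).aestronglyMeasurable.mul hmeas))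
    (hf.continuousOn_mul (hexp μ).continuousOn)
    ((continuous_id.mul (hexp μ)).aestronglyMeasurable.mul hmeas).neg
    ?_ (hf.abs.const_mul _) ?_).2
  · refine Eventually.of_forall fun t ht ν hν => ?_
    have hν : |ν| ≤ |μ| + 1 := by
      have := abs_sub_abs_le_abs_sub ν μ
      rw [Metric.mem_ball, Real.dist_eq] at hν
      linarith
    have hexp_le : exp (-ν * t) ≤ exp ((|μ| + 1) * R) := by
      refine exp_le_exp.mpr ?_
      calc -ν * t ≤ |ν| * |t| := by rw [← abs_mul]; exact (neg_mul ν t ▸ neg_le_abs _)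
        _ ≤ (|μ| + 1) * R := mul_le_mul hν (hR t ht) (abs_nonneg t) (by positivity)
    rw [norm_neg, norm_mul, norm_mul, Real.norm_eq_abs, Real.norm_eq_abs, Real.norm_eq_abs,
      abs_of_pos (exp_pos _)]
    gcongr
    exact hR t ht
  · exact Eventually.of_forall fun t _ ν _ =>
      (((hasDerivAt_neg ν).mul_const t).exp.mul_const (f t)).congr_deriv (by ring)

lemma hasDerivAt_exp_mul_rpow_mul_one_sub_rpow (A γ δ : ℝ) {t : ℝ} (ht : t ∈ Ioo (0 : ℝ) 1) :
    HasDerivAt (fun t => exp (-A * t) * (t ^ γ * (1 - t) ^ δ))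
      (exp (-A * t) * (γ * t ^ (γ - 1) * (1 - t) ^ δ - A * (t ^ γ * (1 - t) ^ δ)
        - δ * t ^ γ * (1 - t) ^ (δ - 1))) t := by
  have hexp := ((hasDerivAt_id' t).const_mul (-A)).exp
  have hpow := Real.hasDerivAt_rpow_const (p := γ) (Or.inl ht.1.ne')
  have hpow' := (Real.hasDerivAt_rpow_const (p := δ) (Or.inl (sub_pos.2 ht.2).ne')).comp t
    ((hasDerivAt_id' t).const_sub 1)
  exact (hexp.mul (hpow.mul hpow')).congr_deriv
    (by simp only [Function.comp_def, Pi.mul_apply]; ring)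

lemma betaHat_contiguous {γ δ : ℝ} (hγ : 0 < γ) (hδ : 0 < δ) (A : ℝ) :
    γ * betaHat γ (δ + 1) A - A * ∫ t in (0 : ℝ)..1, t * exp (-A * t) * betaDens γ (δ + 1) t
      = γ * betaHat (γ + 1) δ A := by
  set C := Gamma (γ + (δ + 1)) / (Gamma γ * Gamma (δ + 1))
  set e : ℝ → ℝ := fun t => exp (-A * t)
  have hderiv : ∀ t ∈ Ioo (0 : ℝ) 1, HasDerivAt (fun t => C * (e t * (t ^ γ * (1 - t) ^ δ)))
      (γ * (e t * betaDens γ (δ + 1) t) - A * (t * e t * betaDens γ (δ + 1) t)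
        - γ * (e t * betaDens (γ + 1) δ t)) t := by
    intro t ht
    refine ((hasDerivAt_exp_mul_rpow_mul_one_sub_rpow A γ δ ht).const_mul C).congr_deriv ?_
    have ht0 : t ≠ 0 := ht.1.ne'
    simp only [e, C, betaDens, Gamma_add_one hγ.ne', Gamma_add_one hδ.ne', add_sub_cancel_right,
      rpow_sub_one ht0, show γ + 1 + δ = γ + (δ + 1) by ring]
    field_simp
  have hβ₁ := intervalIntegrable_betaDens hγ (by linarith : 0 < δ + 1)
  have hβ₂ := intervalIntegrable_betaDens (by linarith : 0 < γ + 1) hδ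
  have he : Continuous e := by fun_prop
  have hI₁ : IntervalIntegrable (fun t => e t * betaDens γ (δ + 1) t) volume 0 1 :=
    hβ₁.continuousOn_mul he.continuousOn
  have hI₂ : IntervalIntegrable (fun t => t * e t * betaDens γ (δ + 1) t) volume 0 1 :=
    hβ₁.continuousOn_mul (show Continuous fun t => t * e t by fun_prop).continuousOn
  have hI₃ : IntervalIntegrable (fun t => e t * betaDens (γ + 1) δ t) volume 0 1 :=
    hβ₂.continuousOn_mul he.continuousOn
  have hFTC := intervalIntegral.integral_eq_sub_of_hasDerivAt_of_le zero_le_one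
    (continuous_const.mul (he.mul ((continuous_rpow_const hγ.le).mul
      ((continuous_rpow_const hδ.le).comp (continuous_const.sub continuous_id))))).continuousOn
    hderiv (((hI₁.const_mul γ).sub (hI₂.const_mul A)).sub (hI₃.const_mul γ))
  rw [intervalIntegral.integral_sub ((hI₁.const_mul γ).sub (hI₂.const_mul A)) (hI₃.const_mul γ),
    intervalIntegral.integral_sub (hI₁.const_mul γ) (hI₂.const_mul A)] at hFTC
  simp only [intervalIntegral.integral_const_mul, Pi.mul_apply, one_rpow, Function.comp_apply,
    Pi.sub_apply, id_eq, sub_self, zero_rpow hδ.ne', mul_zero, zero_rpow hγ.ne', sub_zero,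
    mul_one] at hFTC
  rw [betaHat, betaHat]
  linarith

lemma hasDerivAt_rpow_mul_betaHat {γ δ x : ℝ} (hγ : 0 < γ) (hδ : 0 < δ) (lam : ℝ) (hx : 0 < x) :
    HasDerivAt (fun y => y ^ γ * betaHat γ (δ + 1) (lam * y))
      (γ * x ^ (γ - 1) * betaHat (γ + 1) δ (lam * x)) x := by
  have hβ : HasDerivAt (betaHat γ (δ + 1))
      (∫ t in (0 : ℝ)..1, -(t * exp (-(lam * x) * t) * betaDens γ (δ + 1) t)) (lam * x) :=
    hasDerivAt_integral_exp_neg_mul (intervalIntegrable_betaDens hγ (by linarith)) (lam * x)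
  refine ((hasDerivAt_rpow_const (p := γ) (Or.inl hx.ne')).mul
    (hβ.comp x ((hasDerivAt_id' x).const_mul lam))).congr_deriv ?_
  have hxγ : x ^ γ = x ^ (γ - 1) * x := by rw [rpow_sub_one hx.ne', div_mul_cancel₀ _ hx.ne']
  rw [Function.comp_apply, intervalIntegral.integral_neg, hxγ]
  linear_combination x ^ (γ - 1) * betaHat_contiguous hγ hδ (lam * x)

/-- With `Φ(x,λ) = x^γ β̂_{γ,δ+1}(λx)` and `Ψ(x,λ) = x^δ β̂_{δ,γ+1}(λx)`, for all `x > 0`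
and real `λ`:
`∂Φ/∂x (x,λ) = e^{-λx} Ψ(x,-λ) · γ x^{γ-1} / x^δ` and
`∂Ψ/∂x (x,λ) = e^{-λx} Φ(x,-λ) · δ x^{δ-1} / x^γ`;
i.e. the pair `(Φ,Ψ)` solves the coupled fluctuation system for `H(x) = x^γ`, `Ȟ(x) = x^δ`. -/
theorem statement7 (γ δ : ℝ) (hγ : 0 < γ) (hδ : 0 < δ) (x lam : ℝ) (hx : 0 < x) :
    HasDerivAt (fun y : ℝ => y ^ γ * betaHat γ (δ + 1) (lam * y))
      (Real.exp (-(lam * x)) * (x ^ δ * betaHat δ (γ + 1) (-lam * x))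
        * (γ * x ^ (γ - 1) / x ^ δ)) x ∧
    HasDerivAt (fun y : ℝ => y ^ δ * betaHat δ (γ + 1) (lam * y))
      (Real.exp (-(lam * x)) * (x ^ γ * betaHat γ (δ + 1) (-lam * x))
        * (δ * x ^ (δ - 1) / x ^ γ)) x := by
  have hxγ : x ^ γ ≠ 0 := (rpow_pos_of_pos hx γ).ne'
  have hxδ : x ^ δ ≠ 0 := (rpow_pos_of_pos hx δ).ne'
  rw [neg_mul, betaHat_neg, betaHat_neg]
  constructor
  · convert hasDerivAt_rpow_mul_betaHat hγ hδ lam hx using 1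
    field_simp
    rw [← exp_add, neg_add_cancel, exp_zero, one_mul]
  · convert hasDerivAt_rpow_mul_betaHat hδ hγ lam hx using 1
    field_simp
    rw [← exp_add, neg_add_cancel, exp_zero, one_mul]
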